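/- For every continuous function f : [0,1] → ℝ and nonnegative real k, the sequence of functions x ↦ P_{n,k}^{⟨k/n⟩}(f;x) converges uniformly to f on [0,1] as n → ∞. -/

import Mathlib

open Finset Filter

/-- Pochhammer k-symbol: `(λ)_{m,k} = λ(λ+k)⋯(λ+(m-1)k)`. -/
noncomputable def pochK (lam k : ℝ) (m : ℕ) : ℝ :=
  ∏ i ∈ Finset.range m, (lam + i * k)

/-- Lupaş-type operator based on Polya distribution with Pochhammer k-symbol. -/
noncomputable def LupasP (n : ℕ) (k : ℝ) (f : ℝ → ℝ) (x : ℝ) : ℝ :=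
  (1 / pochK n k n) * ∑ m ∈ Finset.range (n + 1),
    (n.choose m : ℝ) * pochK (n * x) k m * pochK (n - n * x) k (n - m) * f (m / n)

/-- Kantorovich-Stancu modification of the Lupaş-type operator. -/
noncomputable def KantK (n : ℕ) (α β k : ℝ) (f : ℝ → ℝ) (x : ℝ) : ℝ :=
  ((n + β + 1) / pochK n k n) * ∑ m ∈ Finset.range (n + 1),
    (n.choose m : ℝ) * pochK (n * x) k m * pochK (n - n * x) k (n - m) *
      ∫ t in ((m + α) / (n + β + 1))..((m + α + 1) / (n + β + 1)), f t

/-- Modulus of continuity of `f` on `[0,1]`. -/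
noncomputable def modulus (f : ℝ → ℝ) (δ : ℝ) : ℝ :=
  sSup {y | ∃ x t : ℝ, x ∈ Set.Icc (0:ℝ) 1 ∧ t ∈ Set.Icc (0:ℝ) 1 ∧
    |t - x| ≤ δ ∧ y = |f t - f x|}

/-! ### Auxiliary lemmas -/

lemma pochK_zero' (a k : ℝ) : pochK a k 0 = 1 := by simp [pochK]

lemma pochK_succ (a k : ℝ) (m : ℕ) : pochK a k (m+1) = pochK a k m * (a + m * k) := by
  simp [pochK, Finset.prod_range_succ]

lemma pochK_succ' (a k : ℝ) (m : ℕ) : pochK a k (m+1) = a * pochK (a+k) k m := by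
  rw [pochK, Finset.prod_range_succ']
  rw [mul_comm]
  simp only [Nat.cast_zero, zero_mul, add_zero]
  congr 1
  apply Finset.prod_congr rfl
  intro i _
  push_cast
  ring

lemma pochK_nonneg {a k : ℝ} (ha : 0 ≤ a) (hk : 0 ≤ k) (m : ℕ) : 0 ≤ pochK a k m := by
  apply Finset.prod_nonneg
  intro i _
  positivity

lemma pochK_pos {a k : ℝ} (ha : 0 < a) (hk : 0 ≤ k) (m : ℕ) : 0 < pochK a k m := by
  apply Finset.prod_pos
  intro i _
  positivity

/-- Chu–Vandermonde identity for the Pochhammer k-symbol. -/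
lemma vandK (k : ℝ) : ∀ (n : ℕ) (a b : ℝ),
    ∑ m ∈ Finset.range (n+1), (n.choose m : ℝ) * pochK a k m * pochK b k (n-m)
      = pochK (a+b) k n := by
  intro n
  induction n with
  | zero => intro a b; simp [pochK]
  | succ n ih =>
    intro a b
    have hsplit : ∑ m ∈ Finset.range (n+2), ((n+1).choose m : ℝ) * pochK a k m * pochK b k (n+1-m)
        = (∑ j ∈ Finset.range (n+1), (n.choose j : ℝ) * pochK a k (j+1) * pochK b k (n-j))
          + ((∑ j ∈ Finset.range (n+1), (n.choose (j+1) : ℝ) * pochK a k (j+1) * pochK b k (n-j))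
          + pochK b k (n+1)) := by
      rw [Finset.sum_range_succ']
      simp only [Nat.choose_zero_right, Nat.cast_one, one_mul, pochK_zero', Nat.sub_zero]
      rw [← add_assoc, ← Finset.sum_add_distrib]
      congr 1
      apply Finset.sum_congr rfl
      intro j hj
      have hc : ((n+1).choose (j+1) : ℝ) = (n.choose j : ℝ) + (n.choose (j+1) : ℝ) := by
        rw [Nat.choose_succ_succ]; push_cast; ring
      have hnm : n + 1 - (j+1) = n - j := by omega
      rw [hc, hnm]
      ring
    have hB : (∑ j ∈ Finset.range (n+1), (n.choose (j+1) : ℝ) * pochK a k (j+1) * pochK b k (n-j))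
          + pochK b k (n+1)
        = ∑ m ∈ Finset.range (n+1), (n.choose m : ℝ) * pochK a k m * pochK b k ((n-m)+1) := by
      rw [Finset.sum_range_succ' (fun m => (n.choose m : ℝ) * pochK a k m * pochK b k ((n-m)+1)) n]
      simp only [Nat.choose_zero_right, Nat.cast_one, one_mul, pochK_zero', Nat.sub_zero]
      congr 1
      · rw [Finset.sum_range_succ]
        simp only [Nat.choose_succ_self, Nat.cast_zero, zero_mul, add_zero]
        apply Finset.sum_congr rfl
        intro j hj
        have hj' : j < n := Finset.mem_range.mp hj
        have : n - (j+1) + 1 = n - j := by omega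
        rw [this]
    rw [hsplit, hB, ← Finset.sum_add_distrib]
    have : ∑ m ∈ Finset.range (n+1),
        ((n.choose m : ℝ) * pochK a k (m+1) * pochK b k (n-m)
          + (n.choose m : ℝ) * pochK a k m * pochK b k ((n-m)+1))
        = ∑ m ∈ Finset.range (n+1),
            ((n.choose m : ℝ) * pochK a k m * pochK b k (n-m)) * (a + b + n * k) := by
      apply Finset.sum_congr rfl
      intro m hm
      have hm' : m ≤ n := Nat.lt_succ_iff.mp (Finset.mem_range.mp hm)
      rw [pochK_succ, pochK_succ]
      have hcast : ((n - m : ℕ) : ℝ) = (n : ℝ) - (m : ℝ) := by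
        push_cast [Nat.cast_sub hm']; ring
      rw [hcast]
      ring
    rw [this, ← Finset.sum_mul, ih, pochK_succ]

lemma choose_cast_succ (n j : ℕ) :
    ((n+1).choose (j+1) : ℝ) * (j+1) = (n+1) * (n.choose j : ℝ) := by
  have := Nat.add_one_mul_choose_eq n j
  have h : ((n+1) * n.choose j : ℕ) = ((n+1).choose (j+1) * (j+1) : ℕ) := this
  have := congrArg (fun x : ℕ => (x : ℝ)) h
  push_cast at this
  linarith

/-- First moment identity. -/
lemma momentK1 (k : ℝ) (n : ℕ) (a b : ℝ) :
    ∑ m ∈ Finset.range (n+2), ((n+1).choose m : ℝ) * pochK a k m * pochK b k (n+1-m) * m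
      = (n+1) * a * pochK (a+k+b) k n := by
  rw [Finset.sum_range_succ']
  simp only [Nat.cast_zero, mul_zero, add_zero]
  have : ∀ j ∈ Finset.range (n+1),
      ((n+1).choose (j+1) : ℝ) * pochK a k (j+1) * pochK b k (n+1-(j+1)) * ((j:ℝ)+1)
      = ((n:ℝ)+1) * a * ((n.choose j : ℝ) * pochK (a+k) k j * pochK b k (n-j)) := by
    intro j hj
    have hnm : n + 1 - (j+1) = n - j := by omega
    rw [hnm, pochK_succ']
    have hc := choose_cast_succ n j
    linear_combination (a * pochK (a+k) k j * pochK b k (n-j)) * hc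
  rw [Finset.sum_congr rfl (by exact_mod_cast this)]
  rw [← Finset.mul_sum, vandK]
  push_cast
  ring

/-- Second factorial moment identity. -/
lemma momentK2 (k : ℝ) (n : ℕ) (a b : ℝ) :
    ∑ m ∈ Finset.range (n+3), ((n+2).choose m : ℝ) * pochK a k m * pochK b k (n+2-m)
        * ((m:ℝ) * ((m:ℝ)-1))
      = (n+2) * (n+1) * a * (a+k) * pochK (a+2*k+b) k n := by
  rw [Finset.sum_range_succ']
  simp only [Nat.cast_zero, zero_mul, mul_zero, add_zero]
  have : ∀ j ∈ Finset.range (n+2),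
      ((n+2).choose (j+1) : ℝ) * pochK a k (j+1) * pochK b k (n+2-(j+1))
        * (((j:ℝ)+1) * (((j:ℝ)+1)-1))
      = ((n:ℝ)+2) * a * (((n+1).choose j : ℝ) * pochK (a+k) k j * pochK b k (n+1-j) * (j:ℝ)) := by
    intro j hj
    have hnm : n + 2 - (j+1) = n + 1 - j := by omega
    rw [hnm, pochK_succ']
    have hc := choose_cast_succ (n+1) j
    push_cast at hc ⊢
    linear_combination (a * pochK (a+k) k j * pochK b k (n+1-j) * (j:ℝ)) * hc
  rw [Finset.sum_congr rfl (by exact_mod_cast this)]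
  rw [← Finset.mul_sum, momentK1]
  have : a + k + k = a + 2*k := by ring
  rw [this]
  push_cast
  ring
/-- Exact second central moment (variance) identity. -/
lemma varK (k : ℝ) (N : ℕ) (x : ℝ) :
    ∑ m ∈ Finset.range (N+3), ((N+2).choose m : ℝ) * pochK (((N:ℝ)+2)*x) k m
        * pochK (((N:ℝ)+2) - ((N:ℝ)+2)*x) k (N+2-m) * ((m:ℝ)/((N:ℝ)+2) - x)^2
      = ((N:ℝ)+2) * x * (1-x) * (1+k) * pochK (((N:ℝ)+2)+2*k) k N := by
  set ν : ℝ := (N:ℝ)+2 with hνdef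
  have hν0 : ν ≠ 0 := by positivity
  set a : ℝ := ν * x with hadef
  set b : ℝ := ν - ν * x with hbdef
  set P2 : ℝ := pochK (ν+2*k) k N with hP2def
  have hs0 : ∑ m ∈ Finset.range (N+3), ((N+2).choose m : ℝ) * pochK a k m * pochK b k (N+2-m)
      = pochK ν k (N+2) := by
    have h := vandK k (N+2) a b
    have hab : a + b = ν := by ring
    rw [hab] at h
    exact h
  have hP1 : pochK (ν+k) k (N+1) = (ν+k) * P2 := by
    rw [pochK_succ']
    have : ν + k + k = ν + 2*k := by ring
    rw [this]
  have hD2 : pochK ν k (N+2) = ν * ((ν+k) * P2) := by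
    rw [pochK_succ', hP1]
  have hs1 : ∑ m ∈ Finset.range (N+3),
        ((N+2).choose m : ℝ) * pochK a k m * pochK b k (N+2-m) * (m:ℝ)
      = ν * a * ((ν+k) * P2) := by
    have h := momentK1 k (N+1) a b
    have hab : a + k + b = ν + k := by ring
    rw [hab, hP1] at h
    rw [h]
    push_cast
    ring
  have hs2 : ∑ m ∈ Finset.range (N+3),
        ((N+2).choose m : ℝ) * pochK a k m * pochK b k (N+2-m) * ((m:ℝ) * ((m:ℝ)-1))
      = (ν) * (ν-1) * a * (a+k) * P2 := by
    have h := momentK2 k N a b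
    have hab : a + 2*k + b = ν + 2*k := by ring
    rw [hab] at h
    rw [h]
    ring
  have hexp : ∀ m ∈ Finset.range (N+3),
      ((N+2).choose m : ℝ) * pochK a k m * pochK b k (N+2-m) * ((m:ℝ)/ν - x)^2
      = (1/ν^2) * (((N+2).choose m : ℝ) * pochK a k m * pochK b k (N+2-m) * ((m:ℝ) * ((m:ℝ)-1)))
        + (1/ν^2 - 2*x/ν) * (((N+2).choose m : ℝ) * pochK a k m * pochK b k (N+2-m) * (m:ℝ))
        + x^2 * (((N+2).choose m : ℝ) * pochK a k m * pochK b k (N+2-m)) := by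
    intro m hm
    field_simp
    ring
  rw [Finset.sum_congr rfl hexp, Finset.sum_add_distrib, Finset.sum_add_distrib,
    ← Finset.mul_sum, ← Finset.mul_sum, ← Finset.mul_sum, hs0, hs1, hs2, hD2]
  field_simp
  ring

theorem lupas_uniform_convergence (f : ℝ → ℝ) (hf : ContinuousOn f (Set.Icc (0:ℝ) 1))
    (k : ℝ) (hk : 0 ≤ k) :
    TendstoUniformlyOn (fun n x => LupasP n k f x) f Filter.atTop (Set.Icc (0:ℝ) 1) := by
  rw [Metric.tendstoUniformlyOn_iff]
  intro ε hε
  obtain ⟨δ, hδ, hδf⟩ := Metric.uniformContinuousOn_iff.mp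
    (isCompact_Icc.uniformContinuousOn_of_continuous hf) (ε/2) (by positivity)
  obtain ⟨M, hM⟩ := isCompact_Icc.exists_bound_of_continuousOn hf
  have hM0 : 0 ≤ M := le_trans (norm_nonneg _) (hM 0 ⟨le_refl _, by norm_num⟩)
  set B : ℝ := 2*M/δ^2 with hBdef
  have hB0 : 0 ≤ B := by positivity
  obtain ⟨N0, hN0⟩ := exists_nat_gt (B*(1+k)/(ε/2))
  rw [eventually_atTop]
  refine ⟨N0 + 2, fun n hn x hx => ?_⟩
  obtain ⟨N, rfl⟩ : ∃ N, n = N + 2 := ⟨n - 2, by omega⟩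
  obtain ⟨hx0, hx1⟩ := hx
  set ν : ℝ := (N:ℝ) + 2 with hνdef
  have hνN0 : (N0:ℝ) < ν := by
    have : N0 ≤ N := by omega
    have := Nat.cast_le (α := ℝ).mpr this
    rw [hνdef]; linarith
  have hν0 : (0:ℝ) < ν := by positivity
  have ha : 0 ≤ ν * x := by positivity
  have hb : 0 ≤ ν - ν * x := by nlinarith
  set D : ℝ := pochK ν k (N+2) with hDdef
  have hD : 0 < D := pochK_pos hν0 hk _
  set P2 : ℝ := pochK (ν+2*k) k N with hP2def
  have hP2 : 0 ≤ P2 := pochK_nonneg (by positivity) hk _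
  have hD2 : D = ν * ((ν+k) * P2) := by
    rw [hDdef, pochK_succ', pochK_succ']
    have : ν + k + k = ν + 2*k := by ring
    rw [this]
  have hs0 : ∑ m ∈ Finset.range (N+3),
      ((N+2).choose m : ℝ) * pochK (ν*x) k m * pochK (ν - ν*x) k (N+2-m) = D := by
    have h := vandK k (N+2) (ν*x) (ν - ν*x)
    have hab : ν*x + (ν - ν*x) = ν := by ring
    rw [hab] at h
    exact h
  -- rewrite LupasP
  have hcast : ((N+2:ℕ):ℝ) = ν := by push_cast; ring
  have hL : LupasP (N+2) k f x
      = (1/D) * ∑ m ∈ Finset.range (N+3),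
          ((N+2).choose m : ℝ) * pochK (ν*x) k m * pochK (ν - ν*x) k (N+2-m) * f ((m:ℝ)/ν) := by
    simp only [LupasP, hcast, hDdef]
  -- termwise bound
  have hterm : ∀ m ∈ Finset.range (N+3),
      |f ((m:ℝ)/ν) - f x| ≤ ε/2 + B * (((m:ℝ)/ν - x)^2) := by
    intro m hm
    have hmle : (m:ℝ) ≤ ν := by
      have : m ≤ N+2 := by have := Finset.mem_range.mp hm; omega
      have := Nat.cast_le (α := ℝ).mpr this
      rw [hνdef]; push_cast at this ⊢; linarith
    have ht : ((m:ℝ)/ν) ∈ Set.Icc (0:ℝ) 1 :=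
      ⟨by positivity, by rw [div_le_one hν0]; exact hmle⟩
    by_cases hc : dist ((m:ℝ)/ν) x < δ
    · have h := hδf _ ht _ ⟨hx0, hx1⟩ hc
      rw [Real.dist_eq] at h
      have hsq : 0 ≤ B * (((m:ℝ)/ν - x)^2) := by positivity
      linarith
    · push_neg at hc
      rw [Real.dist_eq] at hc
      have h2M : |f ((m:ℝ)/ν) - f x| ≤ 2*M := by
        have h1 : |f ((m:ℝ)/ν)| ≤ M := by
          have := hM _ ht; rwa [Real.norm_eq_abs] at this
        have h2 : |f x| ≤ M := by
          have := hM _ ⟨hx0, hx1⟩; rwa [Real.norm_eq_abs] at this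
        calc |f ((m:ℝ)/ν) - f x| ≤ |f ((m:ℝ)/ν)| + |f x| := abs_sub _ _
          _ ≤ 2*M := by linarith
      have hsq : δ^2 ≤ ((m:ℝ)/ν - x)^2 := by
        calc δ^2 ≤ |(m:ℝ)/ν - x|^2 := by
              apply pow_le_pow_left₀ hδ.le hc
          _ = ((m:ℝ)/ν - x)^2 := sq_abs _
      have h2MB : 2*M ≤ B * (((m:ℝ)/ν - x)^2) := by
        calc 2*M = (2*M/δ^2) * δ^2 := by field_simp
          _ ≤ (2*M/δ^2) * (((m:ℝ)/ν - x)^2) := by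
              apply mul_le_mul_of_nonneg_left hsq (by positivity)
          _ = B * (((m:ℝ)/ν - x)^2) := by rw [hBdef]
      linarith
  -- main estimate
  have hdiff : (∑ m ∈ Finset.range (N+3),
        ((N+2).choose m : ℝ) * pochK (ν*x) k m * pochK (ν - ν*x) k (N+2-m) * f ((m:ℝ)/ν))
        - D * f x
      = ∑ m ∈ Finset.range (N+3),
        ((N+2).choose m : ℝ) * pochK (ν*x) k m * pochK (ν - ν*x) k (N+2-m)
          * (f ((m:ℝ)/ν) - f x) := by
    simp only [mul_sub]
    rw [Finset.sum_sub_distrib, ← Finset.sum_mul, hs0]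
  have habs : |∑ m ∈ Finset.range (N+3),
        ((N+2).choose m : ℝ) * pochK (ν*x) k m * pochK (ν - ν*x) k (N+2-m)
          * (f ((m:ℝ)/ν) - f x)|
      ≤ (ε/2) * D + B * (ν * x * (1-x) * (1+k) * P2) := by
    calc |∑ m ∈ Finset.range (N+3),
          ((N+2).choose m : ℝ) * pochK (ν*x) k m * pochK (ν - ν*x) k (N+2-m)
            * (f ((m:ℝ)/ν) - f x)|
        ≤ ∑ m ∈ Finset.range (N+3),
          |((N+2).choose m : ℝ) * pochK (ν*x) k m * pochK (ν - ν*x) k (N+2-m)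
            * (f ((m:ℝ)/ν) - f x)| := Finset.abs_sum_le_sum_abs _ _
      _ ≤ ∑ m ∈ Finset.range (N+3),
          ((N+2).choose m : ℝ) * pochK (ν*x) k m * pochK (ν - ν*x) k (N+2-m)
            * (ε/2 + B * (((m:ℝ)/ν - x)^2)) := by
          apply Finset.sum_le_sum
          intro m hm
          have hq0 : 0 ≤ ((N+2).choose m : ℝ) * pochK (ν*x) k m * pochK (ν - ν*x) k (N+2-m) :=
            mul_nonneg (mul_nonneg (Nat.cast_nonneg _) (pochK_nonneg ha hk m))
              (pochK_nonneg hb hk _)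
          rw [abs_mul, abs_of_nonneg hq0]
          exact mul_le_mul_of_nonneg_left (hterm m hm) hq0
      _ = (ε/2) * D + B * (ν * x * (1-x) * (1+k) * P2) := by
          have hsplit : ∀ m ∈ Finset.range (N+3),
              ((N+2).choose m : ℝ) * pochK (ν*x) k m * pochK (ν - ν*x) k (N+2-m)
                * (ε/2 + B * (((m:ℝ)/ν - x)^2))
              = (ε/2) * (((N+2).choose m : ℝ) * pochK (ν*x) k m * pochK (ν - ν*x) k (N+2-m))
                + B * (((N+2).choose m : ℝ) * pochK (ν*x) k m * pochK (ν - ν*x) k (N+2-m)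
                  * (((m:ℝ)/ν - x)^2)) := by
            intro m hm; ring
          rw [Finset.sum_congr rfl hsplit, Finset.sum_add_distrib, ← Finset.mul_sum,
            ← Finset.mul_sum, hs0]
          congr 2
          have h := varK k N x
          rw [hνdef]
          exact h
  have hνk : (0:ℝ) < ν + k := by linarith
  have hvar_le : B * (ν * x * (1-x) * (1+k) * P2) ≤ B * ((1+k) * ((ν+k) * P2)) := by
    apply mul_le_mul_of_nonneg_left _ hB0
    have h1 : ν * (x*(1-x)) ≤ ν + k := by nlinarith [mul_nonneg hx0 (by linarith : (0:ℝ) ≤ 1-x)]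
    calc ν * x * (1-x) * (1+k) * P2 = (ν * (x*(1-x))) * ((1+k)*P2) := by ring
      _ ≤ (ν+k) * ((1+k)*P2) := by
          apply mul_le_mul_of_nonneg_right h1 (by positivity)
      _ = (1+k) * ((ν+k)*P2) := by ring
  have hP2pos : 0 < P2 := by
    rw [hP2def]
    exact pochK_pos (by linarith : (0:ℝ) < ν + 2*k) hk N
  -- conclude
  rw [Real.dist_eq, hL]
  have heq : f x - (1/D) * ∑ m ∈ Finset.range (N+3),
      ((N+2).choose m : ℝ) * pochK (ν*x) k m * pochK (ν - ν*x) k (N+2-m) * f ((m:ℝ)/ν)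
      = -(1/D) * ((∑ m ∈ Finset.range (N+3),
        ((N+2).choose m : ℝ) * pochK (ν*x) k m * pochK (ν - ν*x) k (N+2-m) * f ((m:ℝ)/ν))
          - D * f x) := by
    field_simp
    ring
  have hclose : (1/D) * ((ε/2) * D + B * ((1+k) * ((ν+k) * P2))) = ε/2 + B*(1+k)/ν := by
    rw [hD2]
    field_simp
  have hfinal : |f x - (1/D) * ∑ m ∈ Finset.range (N+3),
      ((N+2).choose m : ℝ) * pochK (ν*x) k m * pochK (ν - ν*x) k (N+2-m) * f ((m:ℝ)/ν)|
      ≤ ε/2 + B*(1+k)/ν := by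
    rw [heq, hdiff, abs_mul, abs_neg, abs_of_nonneg (by positivity : (0:ℝ) ≤ 1/D), ← hclose]
    exact mul_le_mul_of_nonneg_left (le_trans habs (add_le_add le_rfl hvar_le)) (by positivity)
  have hlt : B*(1+k)/ν < ε/2 := by
    rw [div_lt_iff₀ hν0]
    have h2 : B*(1+k) < (ε/2) * ν := by
      have h3 := (div_lt_iff₀ (by positivity : (0:ℝ) < ε/2)).mp (lt_trans hN0 hνN0)
      linarith
    linarith
  calc |f x - (1/D) * ∑ m ∈ Finset.range (N+3),
      ((N+2).choose m : ℝ) * pochK (ν*x) k m * pochK (ν - ν*x) k (N+2-m) * f ((m:ℝ)/ν)|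
      ≤ ε/2 + B*(1+k)/ν := hfinal
    _ < ε := by linarith
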